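/- arXiv:1007.1004 — 2 statements merged into one kernel-verified Lean document; each statement's English description precedes it below -/
import Mathlib

section
/- Let (λ_n)_{n≥1} be positive reals, δ > 0, and (p_n)_{n≥1}, (φ_n)_{n≥1} continuously differentiable functions on [0,∞) with φ_n(t) = ∑_{j=1}^n p_j(t) and φ_n'(t) = λ_n(p_{n+1}(t) − p_n(t)) for all n, t. Suppose p_1(t_0) = δ for some t_0 ≥ 0, all p_n(0) = 0, and each p_n is continuous. Define t_n := inf{t : φ_n(t) ≥ nδ}. If each t_n is finite and attained, then for all n ≥ 1, t_{n+1} ≤ t_n and p_{n+1}(t_{n+1}) ≥ δ. -/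
/-!
Write `t_n` for the first time `φ_n` reaches `nδ`. Since `φ_n(0) = 0 < nδ`, `t_n > 0` and
`φ_n < nδ` on `[0, t_n)`, so `φ_n'(t_n) = λ_n (p_{n+1}(t_n) - p_n(t_n)) ≥ 0`. By induction
`p_n(t_n) ≥ δ`, hence `φ_{n+1}(t_n) = φ_n(t_n) + p_{n+1}(t_n) ≥ (n+1)δ`, i.e. `t_{n+1} ≤ t_n`;
and `p_{n+1}(t_{n+1}) = φ_{n+1}(t_{n+1}) - φ_n(t_{n+1}) ≥ (n+1)δ - nδ` because `φ_n < nδ`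
before `t_n`.
-/

open Filter Set Topology

theorem HasDerivAt.nonneg_of_eventually_le_left {f : ℝ → ℝ} {f' x : ℝ} (hf : HasDerivAt f f' x)
    (hle : ∀ᶠ t in 𝓝[<] x, f t ≤ f x) : 0 ≤ f' := by
  refine ge_of_tendsto (hasDerivAt_iff_tendsto_slope_left_right.1 hf).1 ?_
  filter_upwards [hle, self_mem_nhdsWithin] with t ht htx
  rw [slope_def_field]
  exact div_nonneg_of_nonpos (sub_nonpos.2 ht) (sub_nonpos.2 (le_of_lt htx))

noncomputable def hittingTime (f : ℝ → ℝ) (c : ℝ) : ℝ :=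
  sInf {t | 0 ≤ t ∧ c ≤ f t}

section hittingTime

variable {f g q : ℝ → ℝ} {c δ t : ℝ}

theorem hittingTime_nonneg : 0 ≤ hittingTime f c :=
  Real.sInf_nonneg fun _ ht => ht.1

theorem hittingTime_le (h0 : 0 ≤ t) (hc : c ≤ f t) : hittingTime f c ≤ t :=
  csInf_le ⟨0, fun _ hs => hs.1⟩ ⟨h0, hc⟩

theorem lt_of_lt_hittingTime (h0 : 0 ≤ t) (ht : t < hittingTime f c) : f t < c :=
  lt_of_not_ge fun hc => (hittingTime_le h0 hc).not_gt ht

theorem hittingTime_pos (hf0 : f 0 < c) (hT : c ≤ f (hittingTime f c)) :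
    0 < hittingTime f c :=
  hittingTime_nonneg.lt_of_ne fun h => (hf0.trans_le (h ▸ hT)).false

theorem HasDerivAt.nonneg_at_hittingTime {f' : ℝ} (hf : HasDerivAt f f' (hittingTime f c))
    (hpos : 0 < hittingTime f c) (hT : c ≤ f (hittingTime f c)) : 0 ≤ f' :=
  hf.nonneg_of_eventually_le_left <| by
    filter_upwards [Ioo_mem_nhdsLT hpos] with t ht
    exact (lt_of_lt_hittingTime ht.1.le ht.2).le.trans hT

theorem hittingTime_add_le (hg : c ≤ g (hittingTime g c)) (hq : δ ≤ q (hittingTime g c)) :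
    hittingTime (g + q) (c + δ) ≤ hittingTime g c :=
  hittingTime_le hittingTime_nonneg (add_le_add hg hq)

theorem le_apply_hittingTime_add (hg : c ≤ g (hittingTime g c))
    (hq : δ ≤ q (hittingTime g c))
    (hT : c + δ ≤ (g + q) (hittingTime (g + q) (c + δ))) :
    δ ≤ q (hittingTime (g + q) (c + δ)) := by
  rcases (hittingTime_add_le hg hq).lt_or_eq with hlt | heq
  · have := lt_of_lt_hittingTime hittingTime_nonneg hlt
    rw [Pi.add_apply] at hT
    linarith
  · rwa [heq]

end hittingTime

theorem stmt_2_general (lam : ℕ → ℝ) (delta : ℝ) (p phi : ℕ → ℝ → ℝ)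
    (hlam_pos : ∀ n, 1 ≤ n → 0 < lam n) (hdelta : 0 < delta)
    (hphi : ∀ n, ∀ t : ℝ, phi n t = ∑ j ∈ Finset.Icc 1 n, p j t)
    (hderiv : ∀ n, 1 ≤ n → ∀ t : ℝ,
      HasDerivAt (phi n) (lam n * (p (n + 1) t - p n t)) t)
    (hinit : ∀ n, p n 0 = 0)
    (tn : ℕ → ℝ)
    (htn_def : ∀ n, 1 ≤ n → tn n = sInf {t : ℝ | 0 ≤ t ∧ (n : ℝ) * delta ≤ phi n t})
    (htn_attained : ∀ n, 1 ≤ n → 0 ≤ tn n ∧ (n : ℝ) * delta ≤ phi n (tn n)) :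
    ∀ n, 1 ≤ n → tn (n + 1) ≤ tn n ∧ delta ≤ p (n + 1) (tn (n + 1)) := by
  have htn : ∀ n, 1 ≤ n → tn n = hittingTime (phi n) (n * delta) := htn_def
  have hreach n (hn : 1 ≤ n) : n * delta ≤ phi n (hittingTime (phi n) (n * delta)) :=
    htn n hn ▸ (htn_attained n hn).2
  have hsucc n : phi (n + 1) = phi n + p (n + 1) := by
    ext t
    rw [Pi.add_apply, hphi, hphi, Finset.sum_Icc_succ_top (Nat.le_add_left 1 n)]
  have hlevel (n : ℕ) : ((n + 1 : ℕ) : ℝ) * delta = n * delta + delta := by push_cast; ring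
  have hcross n (hn : 1 ≤ n) : p n (tn n) ≤ p (n + 1) (tn n) := by
    have hpos := hittingTime_pos (by simp [hphi, hinit, hdelta]; omega) (hreach n hn)
    rw [htn n hn]
    exact sub_nonneg.1 <| (mul_nonneg_iff_of_pos_left (hlam_pos n hn)).1 <|
      (htn n hn ▸ hderiv n hn (tn n)).nonneg_at_hittingTime hpos (hreach n hn)
  have hstep n (hn : 1 ≤ n) (hδ : delta ≤ p n (tn n)) :
      tn (n + 1) ≤ tn n ∧ delta ≤ p (n + 1) (tn (n + 1)) := by
    have hq : delta ≤ p (n + 1) (hittingTime (phi n) (n * delta)) :=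
      htn n hn ▸ hδ.trans (hcross n hn)
    have hT := hreach (n + 1) (Nat.le_add_left 1 n)
    rw [hlevel, hsucc] at hT
    rw [htn n hn, htn (n + 1) (Nat.le_add_left 1 n), hlevel, hsucc]
    exact ⟨hittingTime_add_le (hreach n hn) hq, le_apply_hittingTime_add (hreach n hn) hq hT⟩
  have hδ : ∀ n, 1 ≤ n → delta ≤ p n (tn n) := by
    refine Nat.le_induction ?_ fun n hn ih => (hstep n hn ih).2
    simpa [hphi] using (htn_attained 1 le_rfl).2
  exact fun n hn => hstep n hn (hδ n hn)

theorem stmt_2 (lam : ℕ → ℝ) (delta : ℝ) (p phi : ℕ → ℝ → ℝ) (t0 : ℝ)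
    (hlam_pos : ∀ n, 1 ≤ n → 0 < lam n) (hdelta : 0 < delta)
    (hphi : ∀ n, ∀ t : ℝ, phi n t = ∑ j ∈ Finset.Icc 1 n, p j t)
    (hderiv : ∀ n, 1 ≤ n → ∀ t : ℝ,
      HasDerivAt (phi n) (lam n * (p (n + 1) t - p n t)) t)
    (hcont : ∀ n, Continuous (p n))
    (ht0 : 0 ≤ t0) (hp1 : p 1 t0 = delta)
    (hinit : ∀ n, p n 0 = 0)
    (tn : ℕ → ℝ)
    (htn_def : ∀ n, 1 ≤ n → tn n = sInf {t : ℝ | 0 ≤ t ∧ (n : ℝ) * delta ≤ phi n t})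
    (htn_attained : ∀ n, 1 ≤ n → 0 ≤ tn n ∧ (n : ℝ) * delta ≤ phi n (tn n)) :
    ∀ n, 1 ≤ n → tn (n + 1) ≤ tn n ∧ delta ≤ p (n + 1) (tn (n + 1)) :=
  stmt_2_general lam delta p phi hlam_pos hdelta hphi hderiv hinit tn htn_def htn_attained
end

section
/- Let (T_n)_{n≥1} be nonnegative random variables on a probability space such that T_n has exponential distribution with mean ν_n > 0 (no independence assumed), with ν_∞ := ∑_n ν_n < ∞ and H := −∑_n ν_n log ν_n finite. Set τ := ∑_{n=1}^∞ T_n and h := H/ν_∞ + log ν_∞. Then for all t ≥ 0, P(T_1 > t) = e^{−t/ν_1} ≤ P(τ > t) and P(τ > t) ≤ e^{−t/ν_∞ + h}. -/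
/-!
Each `T n` has mean `ν n` by the layer-cake formula, so `∑ T n` converges almost surely and
`τ ≥ T 0` almost surely, which gives the lower bound. For the upper bound, split `t` into
thresholds `a n = ν n (c - log ν n)` summing to `t`: if `τ > t` then some `T n > a n`, and the
union bound gives `P(τ > t) ≤ ∑ e^{-a n / ν n} = e^{-c} ∑ ν n`, where `∑ a n = t` forces
`c = (t - H) / ν∞`.
-/

open MeasureTheory Real

lemma lintegral_Ioi_ofReal_exp_neg_div {ν : ℝ} (hν : 0 < ν) :
    ∫⁻ t in Set.Ioi (0 : ℝ), ENNReal.ofReal (exp (-t / ν)) = ENNReal.ofReal ν := by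
  have ha : -ν⁻¹ < 0 := neg_lt_zero.2 (inv_pos.2 hν)
  have hexp : ∀ t : ℝ, exp (-t / ν) = exp (-ν⁻¹ * t) := fun t => by
    rw [neg_div, div_eq_inv_mul, neg_mul]
  simp_rw [hexp]
  rw [← ofReal_integral_eq_lintegral_ofReal (integrableOn_exp_mul_Ioi ha 0)
    (.of_forall fun t => (exp_pos _).le), integral_exp_mul_Ioi ha 0]
  simp

lemma setOf_lt_tsum_subset_iUnion {Ω : Type*} {X : ℕ → Ω → ℝ} {a : ℕ → ℝ} {t : ℝ} (ht : 0 ≤ t)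
    (ha : HasSum a t) : {ω | t < ∑' n, X n ω} ⊆ ⋃ n, {ω | a n < X n ω} := by
  intro ω hω
  by_contra hcon
  simp only [Set.mem_iUnion, Set.mem_ofPred_eq, not_exists, not_lt] at hω hcon
  by_cases hs : Summable fun n => X n ω
  · exact (hs.tsum_le_tsum hcon ha.summable).trans_eq ha.tsum_eq |>.not_gt hω
  · rw [tsum_eq_zero_of_not_summable hs] at hω
    exact ht.not_gt hω

section

variable {Ω : Type*} [MeasurableSpace Ω] {μ : Measure Ω}

lemma lintegral_ofReal_eq_of_measure_lt_eq_exp {X : Ω → ℝ} {ν : ℝ} (hν : 0 < ν)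
    (hX : Measurable X) (hX0 : ∀ ω, 0 ≤ X ω)
    (htail : ∀ t, 0 ≤ t → μ {ω | t < X ω} = ENNReal.ofReal (exp (-t / ν))) :
    ∫⁻ ω, ENNReal.ofReal (X ω) ∂μ = ENNReal.ofReal ν := by
  rw [lintegral_eq_lintegral_meas_lt μ (.of_forall hX0) hX.aemeasurable,
    ← lintegral_Ioi_ofReal_exp_neg_div hν]
  exact setLIntegral_congr_fun measurableSet_Ioi fun t ht => htail t (le_of_lt ht)

lemma ae_summable_of_tsum_lintegral_ne_top {X : ℕ → Ω → ℝ} (hX : ∀ n, Measurable (X n))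
    (hX0 : ∀ n ω, 0 ≤ X n ω) (hfin : ∑' n, ∫⁻ ω, ENNReal.ofReal (X n ω) ∂μ ≠ ⊤) :
    ∀ᵐ ω ∂μ, Summable fun n => X n ω := by
  have hmeas : ∀ n, Measurable fun ω => ENNReal.ofReal (X n ω) := fun n =>
    (hX n).ennreal_ofReal
  rw [← lintegral_tsum fun n => (hmeas n).aemeasurable] at hfin
  filter_upwards [ae_lt_top (Measurable.tsum hmeas) hfin] with ω hω
  simpa [ENNReal.toReal_ofReal (hX0 _ ω)] using ENNReal.summable_toReal hω.ne

lemma measure_lt_le_measure_lt_tsum {X : ℕ → Ω → ℝ} (hX0 : ∀ n ω, 0 ≤ X n ω)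
    (hsum : ∀ᵐ ω ∂μ, Summable fun n => X n ω) (k : ℕ) (t : ℝ) :
    μ {ω | t < X k ω} ≤ μ {ω | t < ∑' n, X n ω} := by
  refine measure_mono_ae ?_
  filter_upwards [hsum] with ω hω hk
  exact hk.trans_le (hω.le_tsum k fun j _ => hX0 j ω)

lemma measure_lt_le_ofReal_exp_of_measure_lt_eq [IsZeroOrProbabilityMeasure μ] {X : Ω → ℝ}
    {ν : ℝ} (hν : 0 < ν) (htail : ∀ t, 0 ≤ t → μ {ω | t < X ω} = ENNReal.ofReal (exp (-t / ν)))
    (a : ℝ) : μ {ω | a < X ω} ≤ ENNReal.ofReal (exp (-a / ν)) := by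
  rcases le_or_gt 0 a with ha | ha
  · exact (htail a ha).le
  · refine prob_le_one.trans ?_
    rw [← ENNReal.ofReal_one, ← exp_zero]
    exact ENNReal.ofReal_le_ofReal (exp_le_exp.2 (div_nonneg (by linarith) hν.le))

lemma exp_neg_mul_sub_log_div {ν : ℝ} (hν : 0 < ν) (c : ℝ) :
    exp (-(ν * (c - log ν)) / ν) = ν * exp (-c) := by
  rw [neg_div, mul_div_cancel_left₀ _ hν.ne', neg_sub, sub_eq_add_neg, exp_add, exp_log hν,
    mul_comm]

lemma measure_lt_tsum_le_ofReal_exp_mul_tsum [IsZeroOrProbabilityMeasure μ] {X : ℕ → Ω → ℝ}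
    {ν : ℕ → ℝ} (hν : ∀ n, 0 < ν n) (hνsum : Summable ν)
    (htail : ∀ n t, 0 ≤ t → μ {ω | t < X n ω} = ENNReal.ofReal (exp (-t / ν n)))
    {t c : ℝ} (ht : 0 ≤ t) (hc : HasSum (fun n => ν n * (c - log (ν n))) t) :
    μ {ω | t < ∑' n, X n ω} ≤ ENNReal.ofReal (exp (-c) * ∑' n, ν n) := by
  calc μ {ω | t < ∑' n, X n ω}
      ≤ μ (⋃ n, {ω | ν n * (c - log (ν n)) < X n ω}) :=
        measure_mono (setOf_lt_tsum_subset_iUnion ht hc)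
    _ ≤ ∑' n, μ {ω | ν n * (c - log (ν n)) < X n ω} := measure_iUnion_le _
    _ ≤ ∑' n, ENNReal.ofReal (ν n * exp (-c)) := ENNReal.tsum_le_tsum fun n => by
        rw [← exp_neg_mul_sub_log_div (hν n)]
        exact measure_lt_le_ofReal_exp_of_measure_lt_eq (hν n) (htail n) _
    _ = ENNReal.ofReal (exp (-c) * ∑' n, ν n) := by
        rw [← ENNReal.ofReal_tsum_of_nonneg (fun n => by have := hν n; positivity)
          (hνsum.mul_right _), tsum_mul_right, mul_comm]

end

theorem stmt_6 {Ω : Type*} [MeasurableSpace Ω] (P : Measure Ω) [IsProbabilityMeasure P]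
    (T : ℕ → Ω → ℝ) (hTmeas : ∀ n, Measurable (T n))
    (hTnonneg : ∀ n ω, 0 ≤ T n ω)
    (nu : ℕ → ℝ) (hnu : ∀ n, 0 < nu n) (hsum : Summable nu)
    (hlog : Summable (fun n => nu n * Real.log (nu n)))
    (hexp : ∀ n, ∀ t : ℝ, 0 ≤ t →
      (P {ω | t < T n ω}).toReal = Real.exp (-t / nu n))
    (nuinf H h : ℝ) (hnuinf : nuinf = ∑' n, nu n)
    (hH : H = -∑' n, nu n * Real.log (nu n))
    (hh : h = H / nuinf + Real.log nuinf)
    (tau : Ω → ℝ) (htau : ∀ ω, tau ω = ∑' n, T n ω) :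
    ∀ t : ℝ, 0 ≤ t →
      (P {ω | t < T 0 ω}).toReal = Real.exp (-t / nu 0) ∧
      Real.exp (-t / nu 0) ≤ (P {ω | t < tau ω}).toReal ∧
      (P {ω | t < tau ω}).toReal ≤ Real.exp (-t / nuinf + h) := by
  intro t ht
  have htail : ∀ n t, 0 ≤ t → P {ω | t < T n ω} = ENNReal.ofReal (exp (-t / nu n)) :=
    fun n t ht => by rw [← hexp n t ht, ENNReal.ofReal_toReal (measure_ne_top P _)]
  have hae : ∀ᵐ ω ∂P, Summable fun n => T n ω := by
    refine ae_summable_of_tsum_lintegral_ne_top hTmeas hTnonneg ?_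
    simp_rw [fun n => lintegral_ofReal_eq_of_measure_lt_eq_exp (hnu n) (hTmeas n)
      (hTnonneg n) (htail n)]
    rw [← ENNReal.ofReal_tsum_of_nonneg (fun n => (hnu n).le) hsum]
    exact ENNReal.ofReal_ne_top
  have htau_eq : {ω | t < tau ω} = {ω | t < ∑' n, T n ω} := by simp_rw [htau]
  have hnuinf_pos : 0 < nuinf := hnuinf ▸ hsum.tsum_pos (fun n => (hnu n).le) 0 (hnu 0)
  refine ⟨hexp 0 t ht, ?_, ?_⟩
  · rw [← hexp 0 t ht, htau_eq]
    exact ENNReal.toReal_mono (measure_ne_top P _) (measure_lt_le_measure_lt_tsum hTnonneg hae 0 t)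
  · set c := (t - H) / nuinf
    have hc : HasSum (fun n => nu n * (c - log (nu n))) t := by
      have hlin : nuinf * c - -H = t := by
        rw [mul_div_cancel₀ _ hnuinf_pos.ne', sub_neg_eq_add, sub_add_cancel]
      simpa only [mul_sub, ← hnuinf, ← neg_eq_iff_eq_neg.2 hH, hlin]
        using (hsum.hasSum.mul_right c).sub hlog.hasSum
    have hbound : exp (-c) * nuinf = exp (-t / nuinf + h) := by
      rw [hh, ← add_assoc, exp_add, exp_log hnuinf_pos]
      congr 2
      ring
    rw [htau_eq, ← hbound]
    refine ENNReal.toReal_le_of_le_ofReal (by positivity) ?_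
    rw [hnuinf]
    exact measure_lt_tsum_le_ofReal_exp_mul_tsum hnu hsum htail ht hc
end
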